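/- If a finite strategic game G is solved by iterated elimination of weakly dominated strategies (leaving each player exactly one strategy), then the resulting joint strategy is a Nash equilibrium of G. -/

import Mathlib

/-!
Weak domination within a restriction is a strict order, hence well founded on a finite strategy
set. So in a step `R →_W R'` every strategy of `R i` does no better, against any profile in `R`,
than some survivor in `R' i`: follow a dominance chain until it leaves the eliminated strategies. A
profitable deviation from `s` within `R` would therefore give a profitable deviation within `R'`,
and being a Nash equilibrium transfers back along the elimination sequence, from the singleton
restriction (where it is trivial) to the whole game.
-/

variable {ι : Type*} {S : ι → Type*}

/-- `si` is weakly dominated by `si'` in the restriction `R`. -/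
def WeaklyDominatedIn [DecidableEq ι] (p : ι → (∀ i, S i) → ℝ)
    (R : ∀ i, Set (S i)) (i : ι) (si si' : S i) : Prop :=
  (∀ t : ∀ j, S j, (∀ j, t j ∈ R j) →
      p i (Function.update t i si') ≥ p i (Function.update t i si)) ∧
    ∃ t : ∀ j, S j, (∀ j, t j ∈ R j) ∧
      p i (Function.update t i si') > p i (Function.update t i si)

/-- One step of elimination of weakly dominated strategies: `R →_W R'`. -/
def StepW [DecidableEq ι] (p : ι → (∀ i, S i) → ℝ) (R R' : ∀ i, Set (S i)) : Prop :=
  R ≠ R' ∧ (∀ i, R' i ⊆ R i) ∧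
    ∀ i, ∀ si ∈ R i, si ∉ R' i → ∃ si' ∈ R i, WeaklyDominatedIn p R i si si'

/-- `s` is a Nash equilibrium of the restriction `R`. -/
def NashOn [DecidableEq ι] (p : ι → (∀ i, S i) → ℝ) (R : ∀ i, Set (S i))
    (s : ∀ i, S i) : Prop :=
  (∀ i, s i ∈ R i) ∧ ∀ i, ∀ si' ∈ R i, p i s ≥ p i (Function.update s i si')

section

variable [DecidableEq ι] {p : ι → (∀ i, S i) → ℝ} {R R' : ∀ i, Set (S i)} {i : ι}

theorem WeaklyDominatedIn.trans {a b c : S i} (hab : WeaklyDominatedIn p R i a b)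
    (hbc : WeaklyDominatedIn p R i b c) : WeaklyDominatedIn p R i a c := by
  obtain ⟨hab_ge, t, ht, hab_lt⟩ := hab
  exact ⟨fun u hu => (hab_ge u hu).trans (hbc.1 u hu), t, ht, hab_lt.trans_le (hbc.1 t ht)⟩

theorem WeaklyDominatedIn.irrefl (a : S i) : ¬WeaklyDominatedIn p R i a a :=
  fun ⟨_, _, _, hlt⟩ => lt_irrefl _ hlt

theorem wellFounded_weaklyDominatedIn [Finite (S i)] :
    WellFounded (fun a b : S i => WeaklyDominatedIn p R i b a) :=
  haveI : IsTrans (S i) (fun a b => WeaklyDominatedIn p R i b a) :=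
    ⟨fun _ _ _ hab hbc => hbc.trans hab⟩
  haveI : Std.Irrefl (fun a b : S i => WeaklyDominatedIn p R i b a) :=
    ⟨WeaklyDominatedIn.irrefl⟩
  Finite.wellFounded_of_trans_of_irrefl _

theorem StepW.exists_mem_payoff_ge [Finite (S i)] (h : StepW p R R') {si : S i}
    (hsi : si ∈ R i) : ∃ si' ∈ R' i, ∀ t : ∀ j, S j, (∀ j, t j ∈ R j) →
      p i (Function.update t i si) ≤ p i (Function.update t i si') := by
  have hwf := wellFounded_weaklyDominatedIn (p := p) (R := R) (i := i)
  induction si using hwf.induction with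
  | _ x ih =>
    by_cases hx : x ∈ R' i
    · exact ⟨x, hx, fun _ _ => le_rfl⟩
    obtain ⟨y, hy, hdom⟩ := h.2.2 i x hsi hx
    obtain ⟨z, hz, hyz⟩ := ih y hdom hy
    exact ⟨z, hz, fun t ht => (hdom.1 t ht).trans (hyz t ht)⟩

theorem NashOn.of_stepW [∀ i, Finite (S i)] {s : ∀ i, S i} (h : StepW p R R')
    (hs : NashOn p R' s) : NashOn p R s := by
  have hsR : ∀ j, s j ∈ R j := fun j => h.2.1 j (hs.1 j)
  refine ⟨hsR, fun i si hsi => ?_⟩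
  obtain ⟨si', hsi', hle⟩ := h.exists_mem_payoff_ge hsi
  exact (hle s hsR).trans (hs.2 i si' hsi')

theorem NashOn.of_reflTransGen [∀ i, Finite (S i)] {s : ∀ i, S i}
    (h : Relation.ReflTransGen (StepW p) R R') (hs : NashOn p R' s) : NashOn p R s := by
  induction h using Relation.ReflTransGen.head_induction_on with
  | refl => exact hs
  | head hstep _ ih => exact ih.of_stepW hstep

theorem nashOn_of_forall_eq_singleton {s : ∀ i, S i} (h : ∀ i, R i = {s i}) : NashOn p R s := by
  refine ⟨fun i => (h i).symm ▸ rfl, fun i si hsi => ?_⟩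
  rw [h i, Set.mem_singleton_iff] at hsi
  rw [hsi, Function.update_eq_self]

end

theorem stmt5_general [DecidableEq ι] [∀ i, Fintype (S i)]
    (p : ι → (∀ i, S i) → ℝ) (R : ∀ i, Set (S i)) (s : ∀ i, S i)
    (hreach : Relation.ReflTransGen (StepW p) (fun i => (Set.univ : Set (S i))) R)
    (hsingle : ∀ i, R i = {s i}) :
    NashOn p (fun i => (Set.univ : Set (S i))) s :=
  (nashOn_of_forall_eq_singleton hsingle).of_reflTransGen hreach

/-- If a finite strategic game is solved by IEWDS, leaving each player with exactly
one strategy, then the resulting joint strategy is a Nash equilibrium of the game. -/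
theorem stmt5 [DecidableEq ι] [Fintype ι] [∀ i, Fintype (S i)] [∀ i, Nonempty (S i)]
    (p : ι → (∀ i, S i) → ℝ) (R : ∀ i, Set (S i)) (s : ∀ i, S i)
    (hreach : Relation.ReflTransGen (StepW p) (fun i => (Set.univ : Set (S i))) R)
    (hsingle : ∀ i, R i = {s i}) :
    NashOn p (fun i => (Set.univ : Set (S i))) s :=
  stmt5_general p R s hreach hsingle
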